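/- arXiv:hep-th/0103109 — 5 statements merged into one kernel-verified Lean document; each statement's English description precedes it below -/
import Mathlib

section
/- For every real x with 0 < x < 1, the series Σ_{m=1}^∞ ((2m+1)!!·(2m-1)!! / (2m+2)!) · x^m converges and equals (1 - x/2 - √(1-x)) / x. -/
/-!
The `m`-th coefficient equals `(-1)^(m+1) * (1/2 choose (m+2))`: both sides have ratio
`(2m+3)/(2m+6)` between consecutive terms. Hence the series is the binomial series of
`√(1 - x) = (1 + (-x))^(1/2)` with its first two terms `1 - x/2` removed, negated and divided
by `x`.
-/

open scoped Nat

theorem Ring.succ_mul_choose_succ {R : Type*} [CommRing R] [BinomialRing R] (r : R) (n : ℕ) :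
    ((n : R) + 1) * Ring.choose r (n + 1) = Ring.choose r n * (r - n) := by
  have h := Ring.choose_smul_choose r (Nat.le_add_right n 1)
  rw [Nat.choose_succ_self_right, Nat.add_sub_cancel_left, Ring.choose_one_right] at h
  rw [← h, nsmul_eq_mul]
  push_cast
  rfl

theorem Real.hasSum_choose_half_mul_pow_sqrt_one_sub {x : ℝ} (hx : |x| < 1) :
    HasSum (fun n => Ring.choose (1 / 2 : ℝ) n * (-x) ^ n) (√(1 - x)) := by
  have hmem : -x ∈ Metric.eball (0 : ℝ) 1 := by
    rw [Metric.mem_eball, edist_zero_right, Real.enorm_eq_ofReal_abs, abs_neg]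
    exact ENNReal.ofReal_lt_one.mpr hx
  simpa [binomialSeries, FormalMultilinearSeries.coeff_ofScalars, mul_comm, ← sub_eq_add_neg,
    Real.sqrt_eq_rpow] using
    (Real.one_add_rpow_hasFPowerSeriesOnBall_zero (a := 1 / 2)).hasSum hmem

theorem doubleFactorial_mul_doubleFactorial_div_factorial_eq_choose_half (m : ℕ) :
    ((2 * m + 3)‼ : ℝ) * (2 * m + 1)‼ / (2 * m + 4)! =
      (-1) ^ (m + 1) * Ring.choose (1 / 2 : ℝ) (m + 2) := by
  induction m with
  | zero =>
    have h1 := Ring.succ_mul_choose_succ (1 / 2 : ℝ) 0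
    have h2 := Ring.succ_mul_choose_succ (1 / 2 : ℝ) 1
    simp only [Ring.choose_zero_right] at h1 h2
    norm_num [Nat.doubleFactorial, Nat.factorial] at h1 h2 ⊢
    linarith
  | succ m ih =>
    have hratio : ((2 * (m + 1) + 3)‼ : ℝ) * (2 * (m + 1) + 1)‼ / (2 * (m + 1) + 4)! =
        (2 * m + 3)‼ * (2 * m + 1)‼ / (2 * m + 4)! * ((2 * m + 3) / (2 * m + 6)) := by
      rw [show 2 * (m + 1) + 3 = 2 * m + 3 + 2 by ring,
        show 2 * (m + 1) + 1 = 2 * m + 1 + 2 by ring,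
        show 2 * (m + 1) + 4 = 2 * m + 4 + 1 + 1 by ring, Nat.doubleFactorial_add_two,
        Nat.doubleFactorial_add_two, Nat.factorial_succ, Nat.factorial_succ]
      push_cast
      field_simp
      ring
    have hrec := Ring.succ_mul_choose_succ (1 / 2 : ℝ) (m + 2)
    rw [hratio, ih]
    push_cast at hrec
    field_simp
    linear_combination (-2 * (-1) ^ m) * hrec

theorem hasSum_doubleFactorial_series_closed_form (x : ℝ) (hx0 : 0 < x) (hx1 : x < 1) :
    HasSum
      (fun m : ℕ =>
        ((Nat.doubleFactorial (2 * (m + 1) + 1) : ℝ) *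
            (Nat.doubleFactorial (2 * (m + 1) - 1) : ℝ) /
          (Nat.factorial (2 * (m + 1) + 2) : ℝ)) * x ^ (m + 1))
      ((1 - x / 2 - Real.sqrt (1 - x)) / x) := by
  have hsqrt := Real.hasSum_choose_half_mul_pow_sqrt_one_sub (abs_lt.2 ⟨by linarith, hx1⟩)
  have htail := ((hasSum_nat_add_iff' 2).2 hsqrt).neg.div_const x
  have hhead : ∑ n ∈ Finset.range 2, Ring.choose (1 / 2 : ℝ) n * (-x) ^ n = 1 - x / 2 := by
    simp [Finset.sum_range_succ]
    ring
  rw [hhead, neg_sub] at htail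
  refine htail.congr_fun fun m => ?_
  rw [show 2 * (m + 1) + 1 = 2 * m + 3 by ring, show 2 * (m + 1) - 1 = 2 * m + 1 by omega,
    show 2 * (m + 1) + 2 = 2 * m + 4 by ring,
    doubleFactorial_mul_doubleFactorial_div_factorial_eq_choose_half]
  field_simp
  ring
end

section
/- For every real x with 0 < x < 1, the series Σ_{m=1}^∞ 2m · ((2m+1)!!·(2m-1)!! / (2m+2)!) · x^m converges and equals (1/x) · ( (1-x)^{-1/2} - 2 + √(1-x) ). -/
/-!
With `n = m + 1`, the double-factorial identity `(2n+2)! = 2^(n+1) (n+1)! (2n+1)‼` turns the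
`m`-th term into `(1 - 1/(n+1)) cₙ xⁿ`, where `cₙ = (2n-1)‼ / (2ⁿ n!)` is the coefficient of `xⁿ`
in the binomial series of `(1 - x)^(-1/2)`. The part `∑ cₙ xⁿ⁺¹ / (n+1)` is, up to the factor `-2`,
the binomial series of `√(1 - x) - 1`, since `(-1)ⁿ⁺¹ (1/2 choose n+1) = -cₙ / (2(n+1))`.
Both binomial series converge for `|x| < 1`, and the closed form follows by algebra.
-/

open Nat

theorem Real.hasSum_choose_mul_pow (a : ℝ) {y : ℝ} (hy : |y| < 1) :
    HasSum (fun n ↦ Ring.choose a n * y ^ n) ((1 + y) ^ a) := by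
  have h := Real.one_add_rpow_hasFPowerSeriesOnBall_zero (a := a) |>.hasSum
    (y := y) (by simpa [edist_dist] using hy)
  simpa [binomialSeries, FormalMultilinearSeries.ofScalars_apply_eq, mul_comm] using h

section Choose

variable {R : Type*} [Ring R] [BinomialRing R]

theorem Ring.succ_mul_choose_succ_eq_choose_mul_sub (r : R) (n : ℕ) :
    ((n : R) + 1) * Ring.choose r (n + 1) = Ring.choose r n * (r - n) := by
  simpa [Nat.choose_succ_self_right, Ring.choose_one_right, nsmul_eq_mul] using
    Ring.choose_smul_choose r (Nat.le_succ n)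

theorem Ring.succ_mul_choose_succ_eq_mul_choose_sub_one (r : R) (n : ℕ) :
    ((n : R) + 1) * Ring.choose r (n + 1) = r * Ring.choose (r - 1) n := by
  simpa [Ring.choose_one_right, nsmul_eq_mul] using
    Ring.choose_smul_choose r (Nat.le_add_left 1 n)

end Choose

/-- The coefficient of `xⁿ` in `(1 - x)^(-1/2)`, that is `centralBinom n / 4ⁿ`. -/
noncomputable def invSqrtCoeff (n : ℕ) : ℝ := (2 * n - 1)‼ / (2 ^ n * n !)

theorem invSqrtCoeff_zero : invSqrtCoeff 0 = 1 := by
  simp [invSqrtCoeff]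

theorem neg_one_pow_mul_choose_neg_half (n : ℕ) :
    (-1) ^ n * Ring.choose (-(1 / 2) : ℝ) n = invSqrtCoeff n := by
  induction n with
  | zero => simp [invSqrtCoeff]
  | succ n ih =>
    have h := Ring.succ_mul_choose_succ_eq_choose_mul_sub (-(1 / 2) : ℝ) n
    have hstep : (-1) ^ (n + 1) * Ring.choose (-(1 / 2) : ℝ) (n + 1)
        = (2 * n + 1) / (2 * (n + 1)) * ((-1) ^ n * Ring.choose (-(1 / 2) : ℝ) n) := by
      generalize Ring.choose (-(1 / 2) : ℝ) (n + 1) = a at h ⊢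
      generalize Ring.choose (-(1 / 2) : ℝ) n = b at h ⊢
      field_simp
      linear_combination (-2) * (-1) ^ n * h
    rw [hstep, ih, invSqrtCoeff, invSqrtCoeff, show 2 * (n + 1) - 1 = 2 * n + 1 by omega,
      Nat.doubleFactorial_add_one, Nat.factorial_succ]
    push_cast
    field_simp
    ring

theorem neg_one_pow_mul_choose_half_succ (n : ℕ) :
    (-1) ^ (n + 1) * Ring.choose (1 / 2 : ℝ) (n + 1) = -invSqrtCoeff n / (2 * (n + 1)) := by
  have h := Ring.succ_mul_choose_succ_eq_mul_choose_sub_one (1 / 2 : ℝ) n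
  rw [← neg_one_pow_mul_choose_neg_half]
  norm_num at h ⊢
  field_simp
  linear_combination (-2) * (-1) ^ n * h

theorem hasSum_invSqrtCoeff_mul_pow {x : ℝ} (hx : |x| < 1) :
    HasSum (fun n ↦ invSqrtCoeff n * x ^ n) ((1 - x) ^ (-(1 / 2) : ℝ)) := by
  have h := Real.hasSum_choose_mul_pow (-(1 / 2)) (y := -x) (by rwa [abs_neg])
  rw [← sub_eq_add_neg] at h
  refine h.congr_fun fun n ↦ ?_
  rw [← neg_one_pow_mul_choose_neg_half, neg_pow]
  ring

theorem hasSum_invSqrtCoeff_mul_pow_succ_div {x : ℝ} (hx : |x| < 1) :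
    HasSum (fun n ↦ invSqrtCoeff n * x ^ (n + 1) / (n + 1)) (2 - 2 * √(1 - x)) := by
  have h := Real.hasSum_choose_mul_pow (1 / 2) (y := -x) (by rwa [abs_neg])
  rw [← Real.sqrt_eq_rpow, ← sub_eq_add_neg, ← hasSum_nat_add_iff' 1] at h
  simp only [Finset.range_one, Finset.sum_singleton, Ring.choose_zero_right, pow_zero,
    mul_one] at h
  rw [show 2 - 2 * √(1 - x) = -2 * (√(1 - x) - 1) by ring]
  refine (h.mul_left (-2)).congr_fun fun n ↦ ?_
  have hcoeff := neg_one_pow_mul_choose_half_succ n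
  rw [neg_pow]
  field_simp at hcoeff ⊢
  linear_combination x ^ (n + 1) * hcoeff

theorem Nat.factorial_two_mul_add_two (n : ℕ) :
    (2 * n + 2)! = 2 ^ (n + 1) * (n + 1)! * (2 * n + 1)‼ := by
  rw [Nat.factorial_eq_mul_doubleFactorial, show 2 * n + 1 + 1 = 2 * (n + 1) by ring,
    Nat.doubleFactorial_two_mul]

theorem two_mul_doubleFactorial_mul_doubleFactorial_div_factorial (n : ℕ) :
    2 * (n : ℝ) * ((2 * n + 1)‼ * (2 * n - 1)‼ / (2 * n + 2)!)
      = invSqrtCoeff n - invSqrtCoeff n / (n + 1) := by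
  have : (0 : ℝ) < (2 * n + 1)‼ := by exact_mod_cast Nat.doubleFactorial_pos _
  rw [invSqrtCoeff, Nat.factorial_two_mul_add_two, Nat.factorial_succ]
  push_cast
  field_simp
  ring

theorem hasSum_weighted_doubleFactorial_series (x : ℝ) (hx0 : 0 < x) (hx1 : x < 1) :
    HasSum
      (fun m : ℕ =>
        (2 * ((m : ℝ) + 1)) *
          ((Nat.doubleFactorial (2 * (m + 1) + 1) : ℝ) *
              (Nat.doubleFactorial (2 * (m + 1) - 1) : ℝ) /
            (Nat.factorial (2 * (m + 1) + 2) : ℝ)) * x ^ (m + 1))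
      ((1 / x) * ((1 - x) ^ (-(1/2) : ℝ) - 2 + Real.sqrt (1 - x))) := by
  have hx : |x| < 1 := by rwa [abs_of_pos hx0]
  have h1x : (0 : ℝ) < 1 - x := by linarith
  have hA := (hasSum_nat_add_iff' 1).mpr (hasSum_invSqrtCoeff_mul_pow hx)
  have hB := (hasSum_nat_add_iff' 1).mpr (hasSum_invSqrtCoeff_mul_pow_succ_div hx)
  simp only [Finset.range_one, Finset.sum_singleton, invSqrtCoeff_zero, pow_zero, mul_one,
    zero_add, pow_one, Nat.cast_zero, div_one, one_mul] at hA hB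
  have hsum : (1 / x) * ((1 - x) ^ (-(1/2) : ℝ) - 2 + √(1 - x))
      = ((1 - x) ^ (-(1 / 2) : ℝ) - 1) - x⁻¹ * (2 - 2 * √(1 - x) - x) := by
    rw [Real.rpow_neg h1x.le, ← Real.sqrt_eq_rpow]
    field_simp
    linear_combination (-1) * Real.sq_sqrt h1x.le
  rw [hsum]
  refine (hA.sub (hB.mul_left x⁻¹)).congr_fun fun m ↦ ?_
  have hterm := two_mul_doubleFactorial_mul_doubleFactorial_div_factorial (m + 1)
  push_cast at hterm ⊢
  rw [hterm]
  field_simp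
  ring
end

section
/- Let η ∈ ℝ³ with η ≠ 0, let v ∈ ℝ³, and let m be a natural number. Then the 2m-fold directional derivative (v·∇)^{2m} applied to the function x ↦ |x|^{2m-1}, evaluated at η, equals [(2m-1)!!]^2 · (|v|² - (v·η̂)²)^m / |η|, where η̂ = η/|η|. -/
/-!
Write `s = ⟪v, x⟫`, `q = ‖x‖²` and `T = gram v x = ‖v‖²‖x‖² - ⟪v, x⟫²` (the Gram determinant
of `v, x`). Along `v` we have `s' = ‖v‖²`, `q' = 2s` and `T' = 0`. By induction on `m`,
`(v·∇)^{2m} ‖x‖^{2m-1} = ((2m-1)!!)² T^m ‖x‖^{-2m-1}` on `x ≠ 0`: writing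
`‖x‖^{2m+1} = q ‖x‖^{2m-1}`, Leibniz' rule has only three terms because `q''' = 0`, and the
derivatives of order `2m+1` and `2m+2` of `‖x‖^{2m-1}` come from the induction hypothesis
since `T` is constant along `v`. Finally `T = ‖η‖² (‖v‖² - ⟪v, η̂⟫²)`.
-/

open RealInnerProductSpace

/-- The directional derivative operator `(v·∇)` acting on real functions on `ℝ³`. -/
noncomputable def dirDeriv (v : EuclideanSpace ℝ (Fin 3))
    (f : EuclideanSpace ℝ (Fin 3) → ℝ) : EuclideanSpace ℝ (Fin 3) → ℝ :=
  fun x => fderiv ℝ f x v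

open scoped ContDiff Nat

local notation "ℝ³" => EuclideanSpace ℝ (Fin 3)


section General

variable {E : Type*} [NormedAddCommGroup E] [InnerProductSpace ℝ E]

theorem ContDiffOn.differentiableAt_of_isOpen {F : Type*} [NormedAddCommGroup F]
    [NormedSpace ℝ F] {f : E → F} {U : Set E} {x : E} (hU : IsOpen U)
    (hf : ContDiffOn ℝ ∞ f U) (hx : x ∈ U) : DifferentiableAt ℝ f x :=
  (hf.differentiableOn (by simp)).differentiableAt (hU.mem_nhds hx)

theorem contDiff_inner_left (w : E) : ContDiff ℝ ∞ fun y : E => ⟪w, y⟫ :=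
  contDiff_const.inner ℝ contDiff_id

theorem contDiffOn_norm_zpow (a : ℤ) : ContDiffOn ℝ ∞ (fun y : E => ‖y‖ ^ a) {0}ᶜ := by
  intro x hx
  have hn : ‖x‖ ≠ 0 := norm_ne_zero_iff.2 hx
  have hzpow : ContDiffAt ℝ ∞ (fun t : ℝ => t ^ a) ‖x‖ := by
    rcases a with n | n
    · simpa using contDiffAt_id.pow n
    · simp only [zpow_negSucc]
      exact (contDiffAt_id.pow (n + 1)).inv (pow_ne_zero _ hn)
  exact (hzpow.comp x (contDiffAt_norm ℝ hx)).contDiffWithinAt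

end General

section Pointwise

variable {v x : ℝ³} {f g : ℝ³ → ℝ}

theorem HasFDerivAt.dirDeriv_eq {L : ℝ³ →L[ℝ] ℝ} (h : HasFDerivAt f L x) :
    dirDeriv v f x = L v := by
  rw [dirDeriv, h.fderiv]

theorem dirDeriv_add (hf : DifferentiableAt ℝ f x) (hg : DifferentiableAt ℝ g x) :
    dirDeriv v (fun y => f y + g y) x = dirDeriv v f x + dirDeriv v g x :=
  (hf.hasFDerivAt.add hg.hasFDerivAt).dirDeriv_eq

theorem dirDeriv_sub (hf : DifferentiableAt ℝ f x) (hg : DifferentiableAt ℝ g x) :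
    dirDeriv v (fun y => f y - g y) x = dirDeriv v f x - dirDeriv v g x :=
  (hf.hasFDerivAt.sub hg.hasFDerivAt).dirDeriv_eq

theorem dirDeriv_const_mul (hf : DifferentiableAt ℝ f x) (c : ℝ) :
    dirDeriv v (fun y => c * f y) x = c * dirDeriv v f x :=
  (hf.hasFDerivAt.const_mul c).dirDeriv_eq

theorem dirDeriv_mul (hf : DifferentiableAt ℝ f x) (hg : DifferentiableAt ℝ g x) :
    dirDeriv v (fun y => f y * g y) x = f x * dirDeriv v g x + g x * dirDeriv v f x :=
  (hf.hasFDerivAt.mul hg.hasFDerivAt).dirDeriv_eq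

theorem dirDeriv_comp {k : ℝ → ℝ} {k' : ℝ} (hk : HasDerivAt k k' (f x))
    (hf : DifferentiableAt ℝ f x) :
    dirDeriv v (fun y => k (f y)) x = k' * dirDeriv v f x := by
  refine (hk.comp_hasFDerivAt x hf.hasFDerivAt).dirDeriv_eq.trans ?_
  simp [dirDeriv]

theorem dirDeriv_inner (w : ℝ³) : dirDeriv v (fun y => ⟪w, y⟫) x = ⟪w, v⟫ :=
  (innerSL ℝ w).hasFDerivAt.dirDeriv_eq

theorem dirDeriv_norm_sq : dirDeriv v (fun y => ‖y‖ ^ 2) x = 2 * ⟪v, x⟫ := by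
  rw [(hasStrictFDerivAt_norm_sq x).hasFDerivAt.dirDeriv_eq]
  simp [real_inner_comm]

theorem dirDeriv_inner_mul (hf : DifferentiableAt ℝ f x) :
    dirDeriv v (fun y => ⟪v, y⟫ * f y) x = ⟪v, x⟫ * dirDeriv v f x + ‖v‖ ^ 2 * f x := by
  rw [dirDeriv_mul ((contDiff_inner_left v).differentiable (by simp) x) hf, dirDeriv_inner,
    real_inner_self_eq_norm_sq, mul_comm (f x)]

theorem dirDeriv_norm_sq_mul (hf : DifferentiableAt ℝ f x) :
    dirDeriv v (fun y => ‖y‖ ^ 2 * f y) x = ‖x‖ ^ 2 * dirDeriv v f x + 2 * (⟪v, x⟫ * f x) := by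
  rw [dirDeriv_mul ((contDiff_norm_sq ℝ (n := ∞)).differentiable (by simp) x) hf,
    dirDeriv_norm_sq]
  ring

theorem dirDeriv_norm (hx : x ≠ 0) : dirDeriv v (fun y => ‖y‖) x = ⟪v, x⟫ / ‖x‖ := by
  have hsq : (fun y : ℝ³ => ‖y‖) = fun y => √(‖y‖ ^ 2) := by
    funext y; rw [Real.sqrt_sq (norm_nonneg y)]
  have hpos : 0 < ‖x‖ := norm_pos_iff.2 hx
  rw [hsq, dirDeriv_comp (Real.hasDerivAt_sqrt (by positivity))
    (contDiff_norm_sq ℝ (n := 1)).differentiable_one.differentiableAt, dirDeriv_norm_sq,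
    Real.sqrt_sq hpos.le]
  field_simp

theorem dirDeriv_norm_zpow (hx : x ≠ 0) (a : ℤ) :
    dirDeriv v (fun y => ‖y‖ ^ a) x = a * ⟪v, x⟫ * ‖x‖ ^ (a - 2) := by
  have hn : ‖x‖ ≠ 0 := norm_ne_zero_iff.2 hx
  rw [dirDeriv_comp (hasDerivAt_zpow a ‖x‖ (Or.inl hn)) (differentiableAt_id.norm ℝ hx),
    dirDeriv_norm hx, zpow_sub₀ hn, zpow_sub₀ hn]
  field_simp

end Pointwise

section OpenSet

variable {v x : ℝ³} {f g : ℝ³ → ℝ} {U : Set ℝ³}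

theorem dirDeriv_congr_of_eqOn (hU : IsOpen U) (h : Set.EqOn f g U) (hx : x ∈ U) :
    dirDeriv v f x = dirDeriv v g x := by
  simp only [dirDeriv, (h.eventuallyEq_of_mem (hU.mem_nhds hx)).fderiv_eq]

theorem iterate_dirDeriv_congr_of_eqOn (hU : IsOpen U) (h : Set.EqOn f g U) (n : ℕ) :
    Set.EqOn ((dirDeriv v)^[n] f) ((dirDeriv v)^[n] g) U := by
  induction n generalizing f g with
  | zero => exact h
  | succ n ih => exact ih fun y hy => dirDeriv_congr_of_eqOn hU h hy

theorem iterate_succ_dirDeriv_of_eqOn (hU : IsOpen U) {n : ℕ}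
    (h : Set.EqOn ((dirDeriv v)^[n] f) g U) (hx : x ∈ U) :
    (dirDeriv v)^[n + 1] f x = dirDeriv v g x := by
  rw [Function.iterate_succ_apply']
  exact dirDeriv_congr_of_eqOn hU h hx

theorem ContDiffOn.dirDeriv (hU : IsOpen U) (hf : ContDiffOn ℝ ∞ f U) :
    ContDiffOn ℝ ∞ (dirDeriv v f) U :=
  (hf.fderiv_of_isOpen hU le_rfl).clm_apply contDiffOn_const

theorem iterate_dirDeriv_add (hU : IsOpen U) (hf : ContDiffOn ℝ ∞ f U)
    (hg : ContDiffOn ℝ ∞ g U) (n : ℕ) (hx : x ∈ U) :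
    (dirDeriv v)^[n] (fun y => f y + g y) x = (dirDeriv v)^[n] f x + (dirDeriv v)^[n] g x := by
  induction n generalizing f g with
  | zero => rfl
  | succ n ih =>
    have hsum : Set.EqOn (dirDeriv v (fun y => f y + g y))
        (fun y => dirDeriv v f y + dirDeriv v g y) U := fun y hy =>
      dirDeriv_add (hf.differentiableAt_of_isOpen hU hy) (hg.differentiableAt_of_isOpen hU hy)
    rw [Function.iterate_succ_apply, iterate_dirDeriv_congr_of_eqOn hU hsum n hx,
      ih (hf.dirDeriv hU) (hg.dirDeriv hU)]
    rfl

theorem iterate_dirDeriv_const_mul (hU : IsOpen U) (hf : ContDiffOn ℝ ∞ f U) (c : ℝ) (n : ℕ)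
    (hx : x ∈ U) :
    (dirDeriv v)^[n] (fun y => c * f y) x = c * (dirDeriv v)^[n] f x := by
  induction n generalizing f with
  | zero => rfl
  | succ n ih =>
    have hmul : Set.EqOn (dirDeriv v (fun y => c * f y)) (fun y => c * dirDeriv v f y) U :=
      fun y hy => dirDeriv_const_mul (hf.differentiableAt_of_isOpen hU hy) c
    rw [Function.iterate_succ_apply, iterate_dirDeriv_congr_of_eqOn hU hmul n hx,
      ih (hf.dirDeriv hU)]
    rfl

theorem iterate_dirDeriv_inner_mul (hU : IsOpen U) (hf : ContDiffOn ℝ ∞ f U) (n : ℕ)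
    (hx : x ∈ U) :
    (dirDeriv v)^[n + 1] (fun y => ⟪v, y⟫ * f y) x
      = ⟪v, x⟫ * (dirDeriv v)^[n + 1] f x + (n + 1) * ‖v‖ ^ 2 * (dirDeriv v)^[n] f x := by
  induction n generalizing f with
  | zero =>
    rw [Function.iterate_one, dirDeriv_inner_mul (hf.differentiableAt_of_isOpen hU hx)]
    simp
  | succ n ih =>
    have hstep : Set.EqOn (dirDeriv v (fun y => ⟪v, y⟫ * f y))
        (fun y => ⟪v, y⟫ * dirDeriv v f y + ‖v‖ ^ 2 * f y) U := fun y hy =>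
      dirDeriv_inner_mul (hf.differentiableAt_of_isOpen hU hy)
    rw [Function.iterate_succ_apply, iterate_dirDeriv_congr_of_eqOn hU hstep _ hx,
      iterate_dirDeriv_add hU ((contDiff_inner_left v).contDiffOn.mul (hf.dirDeriv hU))
        (contDiffOn_const.mul hf) _ hx,
      ih (hf.dirDeriv hU), iterate_dirDeriv_const_mul hU hf _ _ hx]
    simp only [← Function.iterate_succ_apply]
    push_cast
    ring

theorem iterate_dirDeriv_norm_sq_mul (hU : IsOpen U) (hf : ContDiffOn ℝ ∞ f U) (n : ℕ)
    (hx : x ∈ U) :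
    (dirDeriv v)^[n + 2] (fun y => ‖y‖ ^ 2 * f y) x
      = ‖x‖ ^ 2 * (dirDeriv v)^[n + 2] f x + 2 * (n + 2) * ⟪v, x⟫ * (dirDeriv v)^[n + 1] f x
        + (n + 2) * (n + 1) * ‖v‖ ^ 2 * (dirDeriv v)^[n] f x := by
  have hpeel : ∀ {f : ℝ³ → ℝ}, ContDiffOn ℝ ∞ f U → ∀ n : ℕ,
      (dirDeriv v)^[n + 2] (fun y => ‖y‖ ^ 2 * f y) x
        = (dirDeriv v)^[n + 1] (fun y => ‖y‖ ^ 2 * dirDeriv v f y) x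
          + 2 * (⟪v, x⟫ * (dirDeriv v)^[n + 1] f x + (n + 1) * ‖v‖ ^ 2 * (dirDeriv v)^[n] f x) :=
      fun {f} hf n => by
    have hstep : Set.EqOn (dirDeriv v (fun y => ‖y‖ ^ 2 * f y))
        (fun y => ‖y‖ ^ 2 * dirDeriv v f y + 2 * (⟪v, y⟫ * f y)) U := fun y hy =>
      dirDeriv_norm_sq_mul (hf.differentiableAt_of_isOpen hU hy)
    have hsf := (contDiff_inner_left v).contDiffOn.mul hf
    rw [Function.iterate_succ_apply, iterate_dirDeriv_congr_of_eqOn hU hstep _ hx,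
      iterate_dirDeriv_add hU ((contDiff_norm_sq ℝ).contDiffOn.mul (hf.dirDeriv hU))
        (contDiffOn_const.mul hsf) _ hx,
      iterate_dirDeriv_const_mul hU hsf _ _ hx, iterate_dirDeriv_inner_mul hU hf _ hx]
  induction n generalizing f with
  | zero =>
    rw [hpeel hf, Function.iterate_one,
      dirDeriv_norm_sq_mul ((hf.dirDeriv hU).differentiableAt_of_isOpen hU hx)]
    simp only [Function.iterate_succ_apply, Function.iterate_zero_apply]
    push_cast
    ring
  | succ n ih =>
    rw [hpeel hf, ih (hf.dirDeriv hU)]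
    simp only [Function.iterate_succ_apply]
    push_cast
    ring

end OpenSet

section Gram

variable {v x : ℝ³} {g : ℝ³ → ℝ}

noncomputable def gram (v x : ℝ³) : ℝ := ‖v‖ ^ 2 * ‖x‖ ^ 2 - ⟪v, x⟫ ^ 2

theorem gram_eq_norm_sq_mul (hx : x ≠ 0) :
    gram v x = ‖x‖ ^ 2 * (‖v‖ ^ 2 - ⟪v, ‖x‖⁻¹ • x⟫ ^ 2) := by
  have hn : ‖x‖ ≠ 0 := norm_ne_zero_iff.2 hx
  rw [gram, real_inner_smul_right]
  field_simp

theorem contDiff_gram : ContDiff ℝ ∞ (gram v) :=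
  (contDiff_const.mul (contDiff_norm_sq ℝ)).sub ((contDiff_inner_left v).pow 2)

theorem dirDeriv_gram : dirDeriv v (gram v) x = 0 := by
  have hs := (contDiff_inner_left v).differentiable (by simp) x
  have hq := (contDiff_norm_sq ℝ (n := ∞)).differentiable (by simp) x
  change dirDeriv v (fun y => ‖v‖ ^ 2 * ‖y‖ ^ 2 - ⟪v, y⟫ ^ 2) x = 0
  rw [dirDeriv_sub (hq.const_mul _) (hs.fun_pow 2), dirDeriv_const_mul hq, dirDeriv_norm_sq,
    dirDeriv_comp (hasDerivAt_pow 2 _) hs, dirDeriv_inner, real_inner_self_eq_norm_sq]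
  ring

theorem dirDeriv_gram_pow_mul (hg : DifferentiableAt ℝ g x) (j : ℕ) :
    dirDeriv v (fun y => gram v y ^ j * g y) x = gram v x ^ j * dirDeriv v g x := by
  have hT : DifferentiableAt ℝ (gram v) x := contDiff_gram.differentiable (by simp) x
  rw [dirDeriv_mul (hT.fun_pow j) hg, dirDeriv_comp (hasDerivAt_pow j _) hT, dirDeriv_gram]
  ring

theorem dirDeriv_const_mul_gram_pow_mul_norm_zpow (hx : x ≠ 0) (c : ℝ) (j : ℕ) (a : ℤ) :
    dirDeriv v (fun y => c * (gram v y ^ j * ‖y‖ ^ a)) x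
      = c * a * (gram v x ^ j * (⟪v, x⟫ * ‖x‖ ^ (a - 2))) := by
  have hr := (contDiffOn_norm_zpow a).differentiableAt_of_isOpen isOpen_compl_singleton hx
  rw [dirDeriv_const_mul (contDiff_gram.differentiable (by simp) x |>.fun_pow j |>.fun_mul hr),
    dirDeriv_gram_pow_mul hr, dirDeriv_norm_zpow hx]
  ring

theorem dirDeriv_const_mul_gram_pow_mul_inner_mul_norm_zpow (hx : x ≠ 0) (c : ℝ) (j : ℕ)
    (a : ℤ) :
    dirDeriv v (fun y => c * (gram v y ^ j * (⟪v, y⟫ * ‖y‖ ^ a))) x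
      = c * (gram v x ^ j * (‖v‖ ^ 2 * ‖x‖ ^ a + a * ⟪v, x⟫ ^ 2 * ‖x‖ ^ (a - 2))) := by
  have hr := (contDiffOn_norm_zpow a).differentiableAt_of_isOpen isOpen_compl_singleton hx
  have hsr := (contDiff_inner_left v).differentiable (by simp) x |>.fun_mul hr
  rw [dirDeriv_const_mul (contDiff_gram.differentiable (by simp) x |>.fun_pow j |>.fun_mul hsr),
    dirDeriv_gram_pow_mul hsr, dirDeriv_inner_mul hr, dirDeriv_norm_zpow hx]
  ring

end Gram

theorem iterate_dirDeriv_norm_zpow_two_mul_sub_one (v : ℝ³) (m : ℕ) :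
    Set.EqOn ((dirDeriv v)^[2 * m] fun y => ‖y‖ ^ (2 * (m : ℤ) - 1))
      (fun y => ((2 * m - 1)‼ : ℝ) ^ 2 * (gram v y ^ m * ‖y‖ ^ (-(2 * (m : ℤ)) - 1))) {0}ᶜ := by
  have hU : IsOpen ({0}ᶜ : Set ℝ³) := isOpen_compl_singleton
  induction m with
  | zero =>
    intro x _
    simp
  | succ m ih =>
    intro x hx
    set C : ℝ := ((2 * m - 1)‼ : ℝ) ^ 2
    set a : ℤ := -(2 * (m : ℤ)) - 1
    have hd₁ : Set.EqOn ((dirDeriv v)^[2 * m + 1] fun y => ‖y‖ ^ (2 * (m : ℤ) - 1))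
        (fun y => C * a * (gram v y ^ m * (⟪v, y⟫ * ‖y‖ ^ (a - 2)))) {0}ᶜ := fun y hy => by
      rw [iterate_succ_dirDeriv_of_eqOn hU ih hy, dirDeriv_const_mul_gram_pow_mul_norm_zpow hy]
    have hd₂ := iterate_succ_dirDeriv_of_eqOn hU hd₁ hx
    rw [dirDeriv_const_mul_gram_pow_mul_inner_mul_norm_zpow hx] at hd₂
    have hsplit : Set.EqOn (fun y : ℝ³ => ‖y‖ ^ (2 * ((m + 1 : ℕ) : ℤ) - 1))
        (fun y => ‖y‖ ^ 2 * ‖y‖ ^ (2 * (m : ℤ) - 1)) {0}ᶜ := fun y hy => by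
      dsimp only
      rw [show 2 * ((m + 1 : ℕ) : ℤ) - 1 = 2 + (2 * (m : ℤ) - 1) by push_cast; ring,
        zpow_add₀ (norm_ne_zero_iff.2 hy), zpow_two, sq]
    rw [show 2 * (m + 1) = 2 * m + 2 by ring, iterate_dirDeriv_congr_of_eqOn hU hsplit _ hx,
      iterate_dirDeriv_norm_sq_mul hU (contDiffOn_norm_zpow _) _ hx, hd₂, hd₁ hx, ih hx]
    have hn : ‖x‖ ≠ 0 := norm_ne_zero_iff.2 hx
    beta_reduce
    rw [show 2 * m + 2 - 1 = 2 * m + 1 by omega, Nat.doubleFactorial_add_one,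
      show -(2 * ((m + 1 : ℕ) : ℤ)) - 1 = a - 2 by push_cast; ring,
      zpow_sub₀ hn (a - 2), zpow_sub₀ hn a]
    simp only [gram, a, C]
    push_cast
    field_simp
    ring

theorem iterated_dirDeriv_even_norm_pow (η v : EuclideanSpace ℝ (Fin 3)) (hη : η ≠ 0)
    (m : ℕ) :
    ((dirDeriv v)^[2 * m] (fun x => ‖x‖ ^ (2 * (m : ℤ) - 1))) η =
      ((Nat.doubleFactorial (2 * m - 1) : ℝ)) ^ 2 *
        (‖v‖ ^ 2 - ⟪v, ‖η‖⁻¹ • η⟫ ^ 2) ^ m / ‖η‖ := by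
  have hn : ‖η‖ ≠ 0 := norm_ne_zero_iff.2 hη
  rw [iterate_dirDeriv_norm_zpow_two_mul_sub_one v m hη]
  beta_reduce
  rw [gram_eq_norm_sq_mul hη, mul_pow,
    ← pow_mul, show -(2 * (m : ℤ)) - 1 = -((2 * m + 1 : ℕ) : ℤ) by push_cast; ring,
    zpow_neg, zpow_natCast]
  field_simp
  ring
end

section
/- Let η ∈ ℝ³ with η ≠ 0, let v ∈ ℝ³, and let m be a natural number. Then (v·∇)^{2m+1} applied to x ↦ |x|^{2m+1}, evaluated at η, equals [(2m+1)!!]^2 · Σ_{l=0}^{m} (-1)^l · binom(m, l) · (|v|²)^{m-l} · (v·η̂)^{2l+1} / (2l+1), where η̂ = η/|η|. -/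
/-!
Write `D = v·∇`, `ρ = ‖x‖²` and `u = ⟪v, x⟫`. Then `D ρ^t = t ρ^(t-1) (2u)`, `D (2u) = 2‖v‖²`
and `D ‖v‖² = 0`, so, as in Faà di Bruno's formula for a quadratic inner function,
`D^k ρ^s = ∑ₚ M(k, p) (s)_(k-p) ρ^(s-k+p) (2u)^(k-2p) (2‖v‖²)^p`, where `(s)_j` is the falling
factorial and `M(k, p)` counts the ways to group `p` of the `k` derivatives into pairs (one
derivative creating a factor `2u`, a later one turning it into `2‖v‖²`).
For `s = m + 1/2` and `k = 2m + 1` only the terms `p = m - l ≤ m` survive; there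
`2^(m+l+1) (s)_(m+l+1) = (-1)^l (2m+1)‼ (2l-1)‼` and `M(2m+1, m-l) (2l+1)‼ = (2m+1)‼ C(m, l)`.
-/

open RealInnerProductSpace

open Finset Polynomial
open scoped Nat

-- At `p = 0` the truncated `(2 * p - 1)‼` is `0‼ = 1`, as it should be.
def matchingNumber (k p : ℕ) : ℕ := k.choose (2 * p) * (2 * p - 1)‼

namespace matchingNumber

@[simp] lemma zero_right (k : ℕ) : matchingNumber k 0 = 1 := by simp [matchingNumber]

lemma eq_zero_of_lt {k p : ℕ} (h : k < 2 * p) : matchingNumber k p = 0 := by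
  simp [matchingNumber, Nat.choose_eq_zero_of_lt h]

lemma succ_succ (k p : ℕ) :
    matchingNumber (k + 1) (p + 1) =
      matchingNumber k (p + 1) + (k - 2 * p) * matchingNumber k p := by
  have hodd : (2 * p + 1)‼ = (2 * p + 1) * (2 * p - 1)‼ := Nat.doubleFactorial_add_one _
  rw [matchingNumber, matchingNumber, matchingNumber, show 2 * (p + 1) = 2 * p + 1 + 1 by ring,
    Nat.add_sub_cancel, Nat.choose_succ_succ, hodd]
  linear_combination (2 * p - 1)‼ * Nat.choose_succ_right_eq k (2 * p)

lemma sum_range_div_two (k : ℕ) (f : ℕ → ℝ) :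
    ∑ p ∈ range (k + 1), matchingNumber k p * f p =
      ∑ p ∈ range (k / 2 + 1), matchingNumber k p * f p := by
  refine (sum_subset (range_subset_range.mpr (by omega)) fun p _ hp' => ?_).symm
  simp only [mem_range] at hp'
  rw [eq_zero_of_lt (by omega), Nat.cast_zero, zero_mul]

lemma sum_succ (k : ℕ) (S : ℕ → ℝ) :
    ∑ p ∈ range (k + 1),
        (matchingNumber k p * S p + ((k - 2 * p : ℕ) * matchingNumber k p) * S (p + 1)) =
      ∑ p ∈ range (k + 2), matchingNumber (k + 1) p * S p := by
  have hshift : ∑ p ∈ range (k + 1), (matchingNumber k p : ℝ) * S p =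
      ∑ p ∈ range (k + 1), (matchingNumber k (p + 1) : ℝ) * S (p + 1) + S 0 := by
    rw [sum_range_succ' _ k, sum_range_succ _ k, eq_zero_of_lt (show k < 2 * (k + 1) by omega)]
    simp
  rw [sum_add_distrib, hshift, sum_range_succ' _ (k + 1)]
  simp only [succ_succ, zero_right, Nat.cast_add, Nat.cast_mul, add_mul, sum_add_distrib]
  ring

lemma odd_mul_doubleFactorial (p l : ℕ) :
    matchingNumber (2 * (p + l) + 1) p * (2 * l + 1)‼ =
      (2 * (p + l) + 1)‼ * (p + l).choose p := by
  have hfac : ∀ n, (2 * n)! = (2 * n)‼ * (2 * n - 1)‼ := by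
    rintro (_ | n)
    · rfl
    · simpa [Nat.mul_add_one] using Nat.factorial_eq_mul_doubleFactorial (2 * n + 1)
  have hchoose := Nat.choose_mul_factorial_mul_factorial (show 2 * p ≤ 2 * (p + l) + 1 by omega)
  rw [show 2 * (p + l) + 1 - 2 * p = 2 * l + 1 by omega, Nat.factorial_eq_mul_doubleFactorial,
    Nat.factorial_eq_mul_doubleFactorial, hfac, Nat.doubleFactorial_two_mul,
    Nat.doubleFactorial_two_mul, Nat.doubleFactorial_two_mul] at hchoose
  have hm := Nat.choose_mul_factorial_mul_factorial (Nat.le_add_right p l)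
  rw [Nat.add_sub_cancel_left] at hm
  apply Nat.eq_of_mul_eq_mul_right (show 0 < 2 ^ (p + l) * p.factorial * l.factorial by positivity)
  calc _ = (2 * (p + l) + 1).choose (2 * p) * (2 ^ p * p ! * (2 * p - 1)‼) *
        ((2 * l + 1)‼ * (2 ^ l * l !)) := by rw [matchingNumber, pow_add]; ring
    _ = (2 * (p + l) + 1)‼ * (2 ^ (p + l) * (p + l)!) := hchoose
    _ = _ := by rw [← hm]; ring

end matchingNumber

lemma two_pow_mul_descPochhammer_eval_half_odd (m : ℕ) :
    2 ^ (m + 1) * (descPochhammer ℝ (m + 1)).eval ((2 * m + 1 : ℝ) / 2) = (2 * m + 1)‼ := by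
  induction m with
  | zero => simp
  | succ m ih =>
    rw [descPochhammer_succ_left, eval_mul, eval_comp, eval_sub, eval_X, eval_one,
      show 2 * (m + 1) + 1 = 2 * m + 1 + 2 by ring, Nat.doubleFactorial_add_two, Nat.cast_mul,
      ← ih]
    push_cast
    ring_nf

lemma two_pow_mul_descPochhammer_eval_half_odd_add (m l : ℕ) :
    2 ^ (m + l + 1) * (descPochhammer ℝ (m + l + 1)).eval ((2 * m + 1 : ℝ) / 2) * (2 * l + 1) =
      (-1) ^ l * (2 * m + 1)‼ * (2 * l + 1)‼ := by
  induction l with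
  | zero => simp [two_pow_mul_descPochhammer_eval_half_odd]
  | succ l ih =>
    rw [show m + (l + 1) + 1 = m + l + 1 + 1 by ring, descPochhammer_succ_eval,
      show 2 * (l + 1) + 1 = 2 * l + 1 + 2 by ring, Nat.doubleFactorial_add_two]
    push_cast at ih ⊢
    linear_combination (-(2 * l + 3 : ℝ)) * ih

lemma matchingNumber_mul_descPochhammer_eval_half_odd (p l : ℕ) :
    (matchingNumber (2 * (p + l) + 1) p : ℝ) *
        (descPochhammer ℝ (p + l + l + 1)).eval (((2 * (p + l) + 1 : ℕ) : ℝ) / 2) *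
          2 ^ (p + l + l + 1) =
      (2 * (p + l) + 1)‼ ^ 2 * (-1) ^ l * (p + l).choose l / (2 * l + 1) := by
  have hM : (matchingNumber (2 * (p + l) + 1) p : ℝ) * (2 * l + 1)‼ =
      (2 * (p + l) + 1)‼ * (p + l).choose l := by
    rw [← Nat.choose_symm_add]
    exact_mod_cast matchingNumber.odd_mul_doubleFactorial p l
  have hP := two_pow_mul_descPochhammer_eval_half_odd_add (p + l) l
  rw [eq_div_iff (by positivity)]
  apply mul_right_cancel₀ (show ((2 * l + 1)‼ : ℝ) ≠ 0 by positivity)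
  push_cast at hP ⊢
  linear_combination
    (descPochhammer ℝ (p + l + l + 1)).eval ((2 * (p + l) + 1 : ℝ) / 2) * 2 ^ (p + l + l + 1) *
        (2 * l + 1) * hM + (2 * (p + l) + 1)‼ * (p + l).choose l * hP

section InnerProductSpace

variable {E : Type*} [NormedAddCommGroup E] [InnerProductSpace ℝ E]

lemma hasFDerivAt_normSq_rpow_mul_inner_pow (v : E) {x : E} (hx : x ≠ 0) (t : ℝ) (i : ℕ) :
    HasFDerivAt (fun y => (‖y‖ ^ 2) ^ t * (2 * ⟪v, y⟫) ^ i)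
      ((2 * t * (‖x‖ ^ 2) ^ (t - 1) * (2 * ⟪v, x⟫) ^ i) • innerSL ℝ x +
        (2 * i * (‖x‖ ^ 2) ^ t * (2 * ⟪v, x⟫) ^ (i - 1)) • innerSL ℝ v) x := by
  have hρ := ((hasStrictFDerivAt_norm_sq x).hasFDerivAt).rpow_const (p := t)
    (Or.inl (by positivity))
  have hu := (((innerSL ℝ v).hasFDerivAt (x := x)).const_mul 2).pow i
  refine (hρ.fun_mul hu).congr_fderiv ?_
  ext w
  simp
  ring

theorem iterate_fderiv_apply_normSq_rpow (s : ℝ) (v : E) (k : ℕ) {x : E} (hx : x ≠ 0) :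
    (fun f y => fderiv ℝ f y v)^[k] (fun y => (‖y‖ ^ 2) ^ s) x =
      ∑ p ∈ range (k + 1), (matchingNumber k p : ℝ) * ((descPochhammer ℝ (k - p)).eval s *
        (2 * ‖v‖ ^ 2) ^ p * ((‖x‖ ^ 2) ^ (s - (k - p : ℕ)) * (2 * ⟪v, x⟫) ^ (k - 2 * p))) := by
  induction k generalizing x with
  | zero => simp
  | succ k ih =>
    have hev : (fun f y => fderiv ℝ f y v)^[k] (fun y => (‖y‖ ^ 2) ^ s) =ᶠ[nhds x]
        fun y => ∑ p ∈ range (k + 1), (matchingNumber k p : ℝ) *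
          ((descPochhammer ℝ (k - p)).eval s * (2 * ‖v‖ ^ 2) ^ p *
            ((‖y‖ ^ 2) ^ (s - (k - p : ℕ)) * (2 * ⟪v, y⟫) ^ (k - 2 * p))) :=
      Filter.eventually_of_mem (isOpen_compl_singleton.mem_nhds hx) fun y hy => ih hy
    rw [Function.iterate_succ_apply', hev.fderiv_eq, (HasFDerivAt.fun_sum fun p _ =>
      ((hasFDerivAt_normSq_rpow_mul_inner_pow v hx _ _).const_mul _).const_mul _).fderiv]
    simp only [_root_.sum_apply, _root_.add_apply, _root_.smul_apply, innerSL_apply_apply,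
      smul_eq_mul, real_inner_self_eq_norm_sq, real_inner_comm v x]
    refine (sum_congr rfl fun p _ => ?_).trans (matchingNumber.sum_succ k _)
    rcases le_or_gt (2 * p) k with hle | hlt
    · rw [show k + 1 - p = k - p + 1 by omega, show k + 1 - 2 * p = k - 2 * p + 1 by omega,
        show k + 1 - (p + 1) = k - p by omega, show k + 1 - 2 * (p + 1) = k - 2 * p - 1 by omega,
        descPochhammer_succ_eval, Nat.cast_succ, sub_add_eq_sub_sub, pow_succ, pow_succ]
      ring
    · simp [matchingNumber.eq_zero_of_lt hlt]

end InnerProductSpace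

lemma sq_rpow_half_eq_pow {r : ℝ} (hr : 0 ≤ r) (n : ℕ) : (r ^ 2) ^ ((n : ℝ) / 2) = r ^ n := by
  rw [← Real.rpow_natCast r 2, ← Real.rpow_mul hr, ← Real.rpow_natCast r n]
  push_cast
  ring_nf

theorem iterated_dirDeriv_odd_norm_pow (η v : EuclideanSpace ℝ (Fin 3)) (hη : η ≠ 0)
    (m : ℕ) :
    ((dirDeriv v)^[2 * m + 1] (fun x => ‖x‖ ^ (2 * m + 1))) η =
      ((Nat.doubleFactorial (2 * m + 1) : ℝ)) ^ 2 *
        ∑ l ∈ Finset.range (m + 1),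
          (-1 : ℝ) ^ l * (Nat.choose m l : ℝ) * (‖v‖ ^ 2) ^ (m - l) *
            ⟪v, ‖η‖⁻¹ • η⟫ ^ (2 * l + 1) / (2 * (l : ℝ) + 1) := by
  have hf : (fun x : EuclideanSpace ℝ (Fin 3) => ‖x‖ ^ (2 * m + 1)) =
      fun x => (‖x‖ ^ 2) ^ (((2 * m + 1 : ℕ) : ℝ) / 2) :=
    funext fun x => (sq_rpow_half_eq_pow (norm_nonneg x) _).symm
  change (fun f y => fderiv ℝ f y v)^[2 * m + 1] _ η = _
  rw [hf, iterate_fderiv_apply_normSq_rpow _ v _ hη, matchingNumber.sum_range_div_two,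
    show (2 * m + 1) / 2 = m by omega, ← sum_range_reflect, mul_sum]
  refine sum_congr rfl fun l hl => ?_
  obtain ⟨p, rfl⟩ : ∃ p, m = p + l := ⟨m - l, by grind⟩
  rw [show p + l + 1 - 1 - l = p by omega, show 2 * (p + l) + 1 - p = p + l + l + 1 by omega,
    show 2 * (p + l) + 1 - 2 * p = 2 * l + 1 by omega, Nat.add_sub_cancel, real_inner_smul_right]
  have hρ : (‖η‖ ^ 2) ^ (((2 * (p + l) + 1 : ℕ) : ℝ) / 2 - ((p + l + l + 1 : ℕ) : ℝ)) =
      (‖η‖ ^ (2 * l + 1))⁻¹ := by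
    rw [show ((2 * (p + l) + 1 : ℕ) : ℝ) / 2 - ((p + l + l + 1 : ℕ) : ℝ) =
        -(((2 * l + 1 : ℕ) : ℝ) / 2) by push_cast; ring,
      Real.rpow_neg (sq_nonneg _), sq_rpow_half_eq_pow (norm_nonneg _)]
  rw [hρ]
  linear_combination (‖v‖ ^ 2) ^ p * ⟪v, η⟫ ^ (2 * l + 1) / ‖η‖ ^ (2 * l + 1) *
    matchingNumber_mul_descPochhammer_eval_half_odd p l
end

section
/- Let η ∈ ℝ³ with η ≠ 0 and let v ∈ ℝ³ with |v| < 1. Then the series Σ_{m=0}^∞ (1/(2m)!) · (v·∇)^{2m}(|x|^{2m-1})|_{x=η} converges and equals 1 / ( |η| · √(1 - |v|² + (v·η̂)²) ), where η̂ = η/|η|. -/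
/-!
Along the line `t ↦ η + t • v` we have `‖η + t • v‖² = Q t = u t² + 2 s t + c` with `u = ‖v‖²`,
`s = ⟪v, η⟫`, `c = ‖η‖²`, so the `2m`-th directional derivative of `‖x‖ ^ (2m - 1)` at `η` is the
`2m`-th derivative of `Q ^ (m - 1/2)` at `0`. Since `(Q ^ (m + 1/2))' = (2m + 1) (s + u t) Q ^ (m - 1/2)`
and `u Q - (s + u t)² = u c - s²` is constant, the Leibniz rule gives by induction
`(Q ^ (m - 1/2))⁽²ᵐ⁾ = (2m)! (m - 1/2 choose m) (u c - s²) ^ m Q ^ (-m - 1/2)`.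
The series is therefore `‖η‖⁻¹` times the binomial series `∑ (m - 1/2 choose m) w ^ m = (1 - w) ^ (-1/2)`
at `w = ‖v‖² - ⟪v, η / ‖η‖⟫²`, and `0 ≤ w ≤ ‖v‖² < 1` by Cauchy–Schwarz.
-/

open RealInnerProductSpace

open Filter Topology Nat
open scoped ContDiff

open Polynomial in
theorem Ring.succ_nsmul_choose_succ_succ {R : Type*} [CommRing R] [BinomialRing R] (r : R) (k : ℕ) :
    (k + 1) • Ring.choose (r + 1) (k + 1) = (r + 1) * Ring.choose r k := by
  have := BinomialRing.toIsAddTorsionFree (R := R)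
  rw [← nsmul_right_inj (factorial_ne_zero k), smul_smul, mul_comm, ← factorial_succ,
    ← descPochhammer_eq_factorial_smul_choose, ← mul_smul_comm,
    ← descPochhammer_eq_factorial_smul_choose, descPochhammer_succ_left]
  simp [smeval_mul, smeval_comp, smeval_sub, smeval_X, smeval_one]

theorem hasSum_choose_sub_half_mul_pow {w : ℝ} (hw : |w| < 1) :
    HasSum (fun m : ℕ => Ring.choose ((m : ℝ) - 1 / 2) m * w ^ m) (1 / √(1 - w)) := by
  have hw' : w ∈ Metric.eball (0 : ℝ) 1 := by
    simpa [edist_dist, ENNReal.ofReal_lt_one] using hw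
  have h := (Real.one_div_one_sub_rpow_hasFPowerSeriesOnBall_zero (1 / 2)).hasSum hw'
  rw [zero_add, ← Real.sqrt_eq_rpow] at h
  refine h.congr_fun fun m => ?_
  rw [FormalMultilinearSeries.ofScalars_apply_eq, smul_eq_mul]
  ring_nf

theorem Real.sq_rpow_intCast_div_two {r : ℝ} (hr : 0 ≤ r) (k : ℤ) :
    (r ^ 2) ^ ((k : ℝ) / 2) = r ^ k := by
  rw [← Real.rpow_natCast, ← Real.rpow_mul hr, Nat.cast_ofNat, mul_div_cancel₀ _ two_ne_zero,
    Real.rpow_intCast]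

theorem iteratedDeriv_succ_affine_mul (a b : ℝ) {g : ℝ → ℝ} {x : ℝ} (n : ℕ)
    (hg : ContDiffAt ℝ (n + 1) g x) :
    iteratedDeriv (n + 1) (fun t => (a + b * t) * g t) x
      = (a + b * x) * iteratedDeriv (n + 1) g x + (n + 1) * b * iteratedDeriv n g x := by
  have hl : ContDiffAt ℝ (n + 1) (fun t : ℝ => a + b * t) x := by fun_prop
  rw [iteratedDeriv_fun_mul hl hg, Finset.sum_range_succ', Finset.sum_range_succ',
    Finset.sum_eq_zero fun i _ => by simp [iteratedDeriv_succ', iteratedDeriv_const]]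
  simp only [zero_add, choose_one_right, cast_add, cast_one, iteratedDeriv_succ', deriv_const_add',
    deriv_const_mul_id', iteratedDeriv_zero, add_tsub_cancel_right, choose_zero_right, one_mul,
    tsub_zero]
  ring

section Quadratic

variable (u s c : ℝ)

def quadratic (t : ℝ) : ℝ := u * t ^ 2 + 2 * s * t + c

theorem mul_quadratic_sub_sq (t : ℝ) :
    u * quadratic u s c t - (s + u * t) ^ 2 = u * c - s ^ 2 := by
  unfold quadratic; ring

theorem contDiff_quadratic {n : WithTop ℕ∞} : ContDiff ℝ n (quadratic u s c) := by
  unfold quadratic; fun_prop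

theorem isOpen_quadratic_pos : IsOpen {t | 0 < quadratic u s c t} :=
  isOpen_lt continuous_const (contDiff_quadratic u s c (n := 0)).continuous

theorem hasDerivAt_quadratic (t : ℝ) :
    HasDerivAt (quadratic u s c) (2 * (s + u * t)) t := by
  refine ((((hasDerivAt_pow 2 t).const_mul u).add
    ((hasDerivAt_id' t).const_mul (2 * s))).add_const c).congr_deriv ?_
  push_cast; ring

theorem hasDerivAt_quadratic_rpow (α : ℝ) {t : ℝ} (ht : 0 < quadratic u s c t) :
    HasDerivAt (fun t => quadratic u s c t ^ α)
      (2 * α * (s + u * t) * quadratic u s c t ^ (α - 1)) t := by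
  convert (hasDerivAt_quadratic u s c t).rpow_const (p := α) (Or.inl ht.ne') using 1
  ring

theorem iteratedDeriv_add_two_quadratic_rpow (α : ℝ) (n : ℕ) {x : ℝ}
    (hx : 0 < quadratic u s c x) :
    iteratedDeriv (n + 2) (fun t => quadratic u s c t ^ α) x
      = 2 * α * ((s + u * x) * iteratedDeriv (n + 1) (fun t => quadratic u s c t ^ (α - 1)) x
          + (n + 1) * u * iteratedDeriv n (fun t => quadratic u s c t ^ (α - 1)) x) := by
  have h_deriv : deriv (fun t => quadratic u s c t ^ α) =ᶠ[𝓝 x]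
      fun t => 2 * α * ((s + u * t) * quadratic u s c t ^ (α - 1)) := by
    filter_upwards [(isOpen_quadratic_pos u s c).mem_nhds hx] with t ht
    rw [(hasDerivAt_quadratic_rpow u s c α ht).deriv]
    ring
  have hg : ContDiffAt ℝ (n + 1) (fun t => quadratic u s c t ^ (α - 1)) x :=
    (contDiff_quadratic u s c).contDiffAt.rpow_const_of_ne hx.ne'
  rw [iteratedDeriv_succ', h_deriv.iteratedDeriv_eq, iteratedDeriv_const_mul_field,
    iteratedDeriv_succ_affine_mul _ _ _ hg]

theorem iteratedDeriv_quadratic_rpow (m : ℕ) {x : ℝ} (hx : 0 < quadratic u s c x) :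
    iteratedDeriv (2 * m) (fun t => quadratic u s c t ^ ((m : ℝ) - 1 / 2)) x
      = (2 * m)! * Ring.choose ((m : ℝ) - 1 / 2) m * (u * c - s ^ 2) ^ m *
          quadratic u s c x ^ (-(m : ℝ) - 1 / 2) := by
  induction m generalizing x with
  | zero => simp
  | succ m ih =>
    let k : ℝ := (2 * m)! * Ring.choose ((m : ℝ) - 1 / 2) m * (u * c - s ^ 2) ^ m
    have h_even : iteratedDeriv (2 * m) (fun t => quadratic u s c t ^ ((m : ℝ) - 1 / 2)) =ᶠ[𝓝 x]
        fun t => k * quadratic u s c t ^ (-(m : ℝ) - 1 / 2) := by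
      filter_upwards [(isOpen_quadratic_pos u s c).mem_nhds hx] with t ht using ih ht
    have h_odd : iteratedDeriv (2 * m + 1) (fun t => quadratic u s c t ^ ((m : ℝ) - 1 / 2)) x =
        k * (2 * (-(m : ℝ) - 1 / 2) * (s + u * x) *
          quadratic u s c x ^ (-(m : ℝ) - 1 / 2 - 1)) := by
      rw [iteratedDeriv_succ, h_even.deriv_eq]
      exact ((hasDerivAt_quadratic_rpow u s c _ hx).const_mul k).deriv
    have h_pow : quadratic u s c x ^ (-(m : ℝ) - 1 / 2) =
        quadratic u s c x ^ (-(m : ℝ) - 1 / 2 - 1) * quadratic u s c x := by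
      rw [← Real.rpow_add_one hx.ne', sub_add_cancel]
    have h_fact : ((2 * m + 2)! : ℝ) = (2 * m + 2) * (2 * m + 1) * (2 * m)! := by
      push_cast [factorial_succ]; ring
    have h_choose := Ring.succ_nsmul_choose_succ_succ ((m : ℝ) - 1 / 2) m
    rw [nsmul_eq_mul] at h_choose
    rw [show 2 * (m + 1) = 2 * m + 2 by ring, iteratedDeriv_add_two_quadratic_rpow _ _ _ _ _ hx,
      show ((m + 1 : ℕ) : ℝ) - 1 / 2 - 1 = (m : ℝ) - 1 / 2 by push_cast; ring, h_odd, ih hx,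
      show (-((m + 1 : ℕ) : ℝ) - 1 / 2) = -(m : ℝ) - 1 / 2 - 1 by push_cast; ring,
      show ((m + 1 : ℕ) : ℝ) - 1 / 2 = (m : ℝ) - 1 / 2 + 1 by push_cast; ring, h_pow, h_fact]
    push_cast at h_choose ⊢
    linear_combination (-2 * (2 * m + 1) * (2 * m)! * (u * c - s ^ 2) ^ (m + 1) *
        quadratic u s c x ^ (-(m : ℝ) - 1 / 2 - 1)) * h_choose +
      ((2 * m + 1) ^ 2 * k * quadratic u s c x ^ (-(m : ℝ) - 1 / 2 - 1)) *
        mul_quadratic_sub_sq u s c x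

end Quadratic

theorem contDiffOn_norm_zpow_s12 {E : Type*} [NormedAddCommGroup E] [InnerProductSpace ℝ E] (k : ℤ) :
    ContDiffOn ℝ ∞ (fun x : E => ‖x‖ ^ k) {0}ᶜ := by
  intro x hx
  simp_rw [← Real.rpow_intCast]
  exact ((contDiffAt_norm ℝ hx).rpow_const_of_ne (norm_ne_zero_iff.2 hx)).contDiffWithinAt

theorem norm_add_smul_sq {E : Type*} [NormedAddCommGroup E] [InnerProductSpace ℝ E]
    (x v : E) (t : ℝ) : ‖x + t • v‖ ^ 2 = quadratic (‖v‖ ^ 2) ⟪v, x⟫ (‖x‖ ^ 2) t := by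
  rw [norm_add_sq_real, norm_smul, real_inner_smul_right, real_inner_comm, quadratic,
    mul_pow, Real.norm_eq_abs, sq_abs]
  ring

section DirectionalDerivative

variable {U : Set (EuclideanSpace ℝ (Fin 3))} {f : EuclideanSpace ℝ (Fin 3) → ℝ}

theorem contDiffOn_dirDeriv (hU : IsOpen U) (hf : ContDiffOn ℝ ∞ f U)
    (v : EuclideanSpace ℝ (Fin 3)) : ContDiffOn ℝ ∞ (dirDeriv v f) U :=
  (hf.fderiv_of_isOpen hU le_rfl).clm_apply contDiffOn_const

theorem iterate_dirDeriv_apply_eq_iteratedDeriv (hU : IsOpen U) (hf : ContDiffOn ℝ ∞ f U)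
    (v : EuclideanSpace ℝ (Fin 3)) (n : ℕ) {x : EuclideanSpace ℝ (Fin 3)} (hx : x ∈ U) :
    (dirDeriv v)^[n] f x = iteratedDeriv n (fun t : ℝ => f (x + t • v)) 0 := by
  induction n generalizing f with
  | zero => simp
  | succ n ih =>
    rw [Function.iterate_succ_apply, ih (contDiffOn_dirDeriv hU hf v), iteratedDeriv_succ']
    apply EventuallyEq.iteratedDeriv_eq
    have hline : Continuous fun t : ℝ => x + t • v := by fun_prop
    filter_upwards [(hU.preimage hline).mem_nhds (by simpa using hx)] with t ht
    have hd : HasDerivAt (fun t : ℝ => x + t • v) v t := by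
      simpa using ((hasDerivAt_id t).smul_const v).const_add x
    exact ((hf.differentiableOn (by simp)).differentiableAt (hU.mem_nhds ht)).hasFDerivAt
      |>.comp_hasDerivAt t hd |>.deriv.symm

end DirectionalDerivative

theorem iterate_dirDeriv_norm_zpow (η v : EuclideanSpace ℝ (Fin 3)) (hη : η ≠ 0) (m : ℕ) :
    (dirDeriv v)^[2 * m] (fun x => ‖x‖ ^ (2 * (m : ℤ) - 1)) η
      = (2 * m)! * Ring.choose ((m : ℝ) - 1 / 2) m * (‖v‖ ^ 2 * ‖η‖ ^ 2 - ⟪v, η⟫ ^ 2) ^ m /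
          ‖η‖ ^ (2 * m + 1) := by
  have h_line : (fun t : ℝ => ‖η + t • v‖ ^ (2 * (m : ℤ) - 1)) =
      fun t => quadratic (‖v‖ ^ 2) ⟪v, η⟫ (‖η‖ ^ 2) t ^ ((m : ℝ) - 1 / 2) := by
    funext t
    rw [← norm_add_smul_sq, ← Real.sq_rpow_intCast_div_two (norm_nonneg _)]
    push_cast; ring_nf
  have h_zero : quadratic (‖v‖ ^ 2) ⟪v, η⟫ (‖η‖ ^ 2) 0 = ‖η‖ ^ 2 := by simp [quadratic]
  rw [iterate_dirDeriv_apply_eq_iteratedDeriv isOpen_compl_singleton (contDiffOn_norm_zpow_s12 _) v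
      (2 * m) hη, h_line, iteratedDeriv_quadratic_rpow _ _ _ m (by rw [h_zero]; positivity),
    h_zero, show -(m : ℝ) - 1 / 2 = ((-(2 * m + 1 : ℕ) : ℤ) : ℝ) / 2 by push_cast; ring,
    Real.sq_rpow_intCast_div_two (norm_nonneg _), zpow_neg, zpow_natCast, ← div_eq_mul_inv]

theorem hasSum_lienard_wiechert_resummation (η v : EuclideanSpace ℝ (Fin 3))
    (hη : η ≠ 0) (hv : ‖v‖ < 1) :
    HasSum
      (fun m : ℕ =>
        (1 / (Nat.factorial (2 * m) : ℝ)) *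
          ((dirDeriv v)^[2 * m] (fun x => ‖x‖ ^ (2 * (m : ℤ) - 1))) η)
      (1 / (‖η‖ * Real.sqrt (1 - ‖v‖ ^ 2 + ⟪v, ‖η‖⁻¹ • η⟫ ^ 2))) := by
  set w := ‖v‖ ^ 2 - ⟪v, ‖η‖⁻¹ • η⟫ ^ 2 with hw_def
  have h_cs : ⟪v, ‖η‖⁻¹ • η⟫ ^ 2 ≤ ‖v‖ ^ 2 := by
    have h := abs_real_inner_le_norm v (‖η‖⁻¹ • η)
    rw [norm_smul, norm_inv, norm_norm, inv_mul_cancel₀ (norm_ne_zero_iff.2 hη), mul_one] at h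
    simpa [sq_abs] using pow_le_pow_left₀ (abs_nonneg _) h 2
  have hw : |w| < 1 :=
    abs_lt.2 ⟨by nlinarith [sq_nonneg ⟪v, ‖η‖⁻¹ • η⟫], by nlinarith [norm_nonneg v]⟩
  have h_gram : ‖v‖ ^ 2 * ‖η‖ ^ 2 - ⟪v, η⟫ ^ 2 = w * ‖η‖ ^ 2 := by
    rw [hw_def, real_inner_smul_right]
    field_simp
  have h_term (m : ℕ) : (1 / ((2 * m)! : ℝ)) *
      (dirDeriv v)^[2 * m] (fun x => ‖x‖ ^ (2 * (m : ℤ) - 1)) η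
        = Ring.choose ((m : ℝ) - 1 / 2) m * w ^ m * ‖η‖⁻¹ := by
    rw [iterate_dirDeriv_norm_zpow η v hη, h_gram, mul_pow, ← pow_mul, pow_succ]
    field_simp
  have h_value : 1 / (‖η‖ * √(1 - ‖v‖ ^ 2 + ⟪v, ‖η‖⁻¹ • η⟫ ^ 2)) = 1 / √(1 - w) * ‖η‖⁻¹ := by
    rw [show 1 - ‖v‖ ^ 2 + ⟪v, ‖η‖⁻¹ • η⟫ ^ 2 = 1 - w by ring, one_div, one_div,
      mul_inv_rev]
  rw [h_value]
  exact ((hasSum_choose_sub_half_mul_pow hw).mul_right _).congr_fun h_term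
end
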